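/- arXiv:2207.01783 — 2 statements merged into one kernel-verified Lean document; each statement's English description precedes it below -/
import Mathlib

section
/- Let n ≥ 1, 0 < q < 1, and let λ(π) = q^{d_R(π)} / ψ(n,q) be the probability mass function of the RMJ-based ranking model with identity central ranking. For a top-k list π_k (an injective map {1,...,k} → [n]), define λ(π_k) as the sum of λ(π) over all full permutations π whose first k values agree with π_k. Then λ(π_k) = q^{d(π_k) + L(π_k)} · ψ(n-k, q) / ψ(n, q), where d(π_k) = Σ_{i=1}^{k-1} 1{π_k(i) > π_k(i+1)}·(n-i) and L(π_k) is the number of items x not among {π_k(1),...,π_k(k)} with x < π_k(k). -/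
open Finset

/-- ψ(n,q) = ∏_{i=1}^{n} (1 + q + ... + q^{i-1}). -/
def psi (n : ℕ) (q : ℝ) : ℝ := ∏ i ∈ Finset.range n, ∑ j ∈ Finset.range (i + 1), q ^ j

/-- Reverse major index of a full permutation. -/
def dR {n : ℕ} (π : Equiv.Perm (Fin n)) : ℕ :=
  ∑ i : Fin (n - 1),
    if π ⟨i.val + 1, by have := i.isLt; omega⟩ < π ⟨i.val, by have := i.isLt; omega⟩ then
      n - (i.val + 1) else 0

/-- Truncated reverse major index of a top-k list. -/
def dtop {n k : ℕ} (f : Fin k → Fin n) : ℕ :=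
  ∑ i : Fin (k - 1),
    if f ⟨i.val + 1, by have := i.isLt; omega⟩ < f ⟨i.val, by have := i.isLt; omega⟩ then
      n - (i.val + 1) else 0

/-- L(π_k): number of items not appearing in the top-k list that are smaller than its
last entry. -/
def Ltop {n k : ℕ} (f : Fin k → Fin n) : ℕ :=
  if h : 0 < k then
    (Finset.univ.filter
      (fun x : Fin n => x ∉ Finset.image f Finset.univ ∧ x < f ⟨k - 1, by omega⟩)).card
  else 0

/-!
Splitting the permutations that extend the top-`k` list `f` according to their next value `y`,
which ranges over the `n - k` unused items, reduces the claim for `k` to the claim for `k + 1`;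
this is a downward induction starting from `k = n`, where exactly one permutation extends `f`.
Appending `y` adds the descent weight `n - k` exactly when `y < f (k - 1)` and replaces `L` by the
rank `j` of `y` among the unused items. As `y < f (k - 1)` iff `j < L(f)`, the new factors sum to
`∑_{j < n-k} q ^ ([j < L] (n - k) + j) = q ^ L (1 + q + ⋯ + q ^ (n-k-1)) = q ^ L ψ(n-k) / ψ(n-k-1)`.
-/

lemma psi_succ (m : ℕ) (q : ℝ) : psi (m + 1) q = psi m q * ∑ j ∈ range (m + 1), q ^ j :=
  prod_range_succ _ _

lemma sum_range_pow_ite_add {R : Type*} [CommSemiring R] (q : R) {L m : ℕ} (hL : L ≤ m) :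
    ∑ j ∈ range m, q ^ ((if j < L then m else 0) + j) = q ^ L * ∑ j ∈ range m, q ^ j := by
  -- both sides are `∑ q ^ e` over the exponents `e ∈ [L, L + m)`
  obtain ⟨r, rfl⟩ := Nat.exists_eq_add_of_le hL
  have low : ∀ j ∈ range L, q ^ ((if j < L then L + r else 0) + j) = q ^ L * q ^ (r + j) := by
    intro j hj
    rw [if_pos (mem_range.1 hj)]
    ring
  have high : ∀ j ∈ range r, q ^ ((if L + j < L then L + r else 0) + (L + j)) = q ^ L * q ^ j := by
    intro j _
    rw [if_neg (by omega), pow_add]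
    ring
  rw [sum_range_add, sum_congr rfl low, sum_congr rfl high, add_comm L r, sum_range_add, mul_add,
    mul_sum, mul_sum, add_comm]

section Rank

variable {α : Type*} [LinearOrder α] (s : Finset α)

lemma card_filter_lt_mono {a b : α} (h : a ≤ b) : #{x ∈ s | x < a} ≤ #{x ∈ s | x < b} :=
  card_le_card (monotone_filter_right s fun _ _ hx => hx.trans_le h)

lemma card_filter_lt_lt_of_lt {a b : α} (ha : a ∈ s) (h : a < b) :
    #{x ∈ s | x < a} < #{x ∈ s | x < b} := by
  refine card_lt_card ((ssubset_iff_of_subset ?_).2 ⟨a, ?_, ?_⟩)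
  · exact monotone_filter_right s fun _ _ hx => hx.trans h
  · simpa [ha] using h
  · simp

lemma card_filter_lt_strictMonoOn : StrictMonoOn (fun y => #{x ∈ s | x < y}) s :=
  fun _ ha _ _ => card_filter_lt_lt_of_lt s ha

lemma lt_iff_card_filter_lt_lt {a : α} (ha : a ∈ s) (b : α) :
    a < b ↔ #{x ∈ s | x < a} < #{x ∈ s | x < b} :=
  ⟨card_filter_lt_lt_of_lt s ha,
    fun h => lt_of_not_ge fun hba => (card_filter_lt_mono s hba).not_gt h⟩

lemma image_card_filter_lt : s.image (fun y => #{x ∈ s | x < y}) = range #s := by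
  refine eq_of_subset_of_card_le (fun j hj => ?_) ?_
  · obtain ⟨y, hy, rfl⟩ := mem_image.1 hj
    exact mem_range.2 (card_lt_card (filter_ssubset.2 ⟨y, hy, lt_irrefl y⟩))
  · rw [card_range, card_image_of_injOn (card_filter_lt_strictMonoOn s).injOn]

lemma sum_pow_ite_card_filter_lt {R : Type*} [CommSemiring R] (q : R) (c : α) :
    ∑ y ∈ s, q ^ ((if y < c then #s else 0) + #{x ∈ s | x < y})
      = q ^ #{x ∈ s | x < c} * ∑ j ∈ range #s, q ^ j := by
  set L := #{x ∈ s | x < c}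
  calc ∑ y ∈ s, q ^ ((if y < c then #s else 0) + #{x ∈ s | x < y})
      = ∑ y ∈ s, (fun j => q ^ ((if j < L then #s else 0) + j)) #{x ∈ s | x < y} :=
        sum_congr rfl fun y hy => by simp only [lt_iff_card_filter_lt_lt s hy c, L]
    _ = ∑ j ∈ range #s, q ^ ((if j < L then #s else 0) + j) := by
        rw [← image_card_filter_lt s, sum_image (card_filter_lt_strictMonoOn s).injOn]
    _ = q ^ L * ∑ j ∈ range #s, q ^ j := sum_range_pow_ite_add q (card_filter_le s _)

end Rank

/-- `ψ(n, q) · λ(f)`, the unnormalised mass of the top-`k` list `f`. -/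
def topWeight (q : ℝ) {n k : ℕ} (hkn : k ≤ n) (f : Fin k → Fin n) : ℝ :=
  ∑ π : Equiv.Perm (Fin n), if ∀ i : Fin k, π (Fin.castLE hkn i) = f i then q ^ dR π else 0

lemma extends_snoc_iff {n k : ℕ} (hk : k < n) (π : Equiv.Perm (Fin n)) (f : Fin k → Fin n)
    (y : Fin n) :
    (∀ i : Fin (k + 1), π (Fin.castLE hk i) = (Fin.snoc f y : Fin (k + 1) → Fin n) i) ↔
      (∀ i : Fin k, π (Fin.castLE hk.le i) = f i) ∧ π ⟨k, hk⟩ = y := by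
  rw [Fin.forall_fin_succ']
  simp only [Fin.castLE_castSucc, Fin.snoc_castSucc, Fin.snoc_last]
  exact Iff.rfl

lemma sum_ite_extends_eq_sum_snoc {M : Type*} [AddCommMonoid M] {n k : ℕ} (hk : k < n)
    (f : Fin k → Fin n) (w : Equiv.Perm (Fin n) → M) :
    (∑ π : Equiv.Perm (Fin n), if ∀ i : Fin k, π (Fin.castLE hk.le i) = f i then w π else 0) =
      ∑ y ∈ (univ.image f)ᶜ, ∑ π : Equiv.Perm (Fin n),
        if ∀ i : Fin (k + 1), π (Fin.castLE hk i) = (Fin.snoc f y : Fin (k + 1) → Fin n) i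
        then w π else 0 := by
  rw [sum_comm]
  refine sum_congr rfl fun π _ => ?_
  simp only [extends_snoc_iff]
  by_cases hπ : ∀ i : Fin k, π (Fin.castLE hk.le i) = f i
  · rw [if_pos hπ]
    simp only [and_iff_right hπ]
    rw [sum_ite_eq, if_pos]
    simp only [mem_compl, mem_image, mem_univ, true_and, not_exists]
    intro i hi
    rw [← hπ i, π.apply_eq_iff_eq, Fin.ext_iff, Fin.val_castLE] at hi
    exact i.isLt.ne hi
  · simp [hπ]

def descentWeight {n k : ℕ} (f : Fin k → Fin n) (i : ℕ) : ℕ :=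
  if h : i + 1 < k then (if f ⟨i + 1, h⟩ < f ⟨i, by omega⟩ then n - (i + 1) else 0) else 0

lemma dtop_eq_sum_range {n k : ℕ} (f : Fin k → Fin n) :
    dtop f = ∑ i ∈ range (k - 1), descentWeight f i := by
  rw [dtop, ← Fin.sum_univ_eq_sum_range]
  refine sum_congr rfl fun i _ => ?_
  rw [descentWeight, dif_pos (by omega)]

lemma dtop_snoc {n k : ℕ} (f : Fin (k + 1) → Fin n) (y : Fin n) :
    dtop (Fin.snoc f y : Fin (k + 2) → Fin n) =
      dtop f + if y < f (Fin.last k) then n - (k + 1) else 0 := by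
  have snoc_lt (i : ℕ) (h : i < k + 1) :
      (Fin.snoc f y : Fin (k + 2) → Fin n) ⟨i, by omega⟩ = f ⟨i, h⟩ :=
    Fin.snoc_castSucc (α := fun _ => Fin n) y f ⟨i, h⟩
  have snoc_top : (Fin.snoc f y : Fin (k + 2) → Fin n) ⟨k + 1, by omega⟩ = y :=
    Fin.snoc_last (α := fun _ => Fin n) y f
  rw [dtop_eq_sum_range, dtop_eq_sum_range, Nat.add_sub_cancel, Nat.add_sub_cancel, sum_range_succ]
  congr 1
  · refine sum_congr rfl fun i hi => ?_
    have hi : i + 1 < k + 1 := by simpa using hi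
    rw [descentWeight, descentWeight, dif_pos hi, dif_pos (by omega), snoc_lt, snoc_lt]
  · rw [descentWeight, dif_pos (by omega), snoc_lt k (by omega), snoc_top]
    rfl

lemma Ltop_eq {n k : ℕ} (f : Fin (k + 1) → Fin n) :
    Ltop f = #{x ∈ (univ.image f)ᶜ | x < f (Fin.last k)} := by
  rw [Ltop, dif_pos k.succ_pos]
  congr 1
  ext x
  simp only [mem_filter, mem_univ, true_and, mem_compl]
  rfl

lemma Ltop_snoc {n k : ℕ} (f : Fin (k + 1) → Fin n) (y : Fin n) :
    Ltop (Fin.snoc f y : Fin (k + 2) → Fin n) = #{x ∈ (univ.image f)ᶜ | x < y} := by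
  rw [Ltop_eq, Fin.snoc_last]
  congr 1
  ext x
  simp +contextual [Fin.exists_fin_succ', ne_of_gt]

lemma topWeight_self (q : ℝ) {n : ℕ} (h : n ≤ n) {f : Fin n → Fin n} (hf : Function.Injective f) :
    topWeight q h f = q ^ dtop f := by
  set σ := Equiv.ofBijective f hf.bijective_of_finite
  have extends_iff (π : Equiv.Perm (Fin n)) : (∀ i, π (Fin.castLE h i) = f i) ↔ σ = π := by
    rw [Equiv.ext_iff]
    exact ⟨fun hπ i => (hπ i).symm, fun hπ i => (hπ i).symm⟩
  simp only [topWeight, extends_iff, sum_ite_eq, mem_univ, if_true]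
  rfl

theorem topWeight_eq (q : ℝ) {n k : ℕ} (hkn : k + 1 ≤ n) {f : Fin (k + 1) → Fin n}
    (hf : Function.Injective f) :
    topWeight q hkn f = q ^ (dtop f + Ltop f) * psi (n - (k + 1)) q := by
  obtain ⟨d, hd⟩ : ∃ d, n - (k + 1) = d := ⟨_, rfl⟩
  induction d generalizing k with
  | zero =>
    obtain rfl : n = k + 1 := by omega
    rw [topWeight_self q hkn hf, Ltop_eq, image_univ_of_surjective hf.bijective_of_finite.2]
    simp [psi]
  | succ d ih =>
    have hk : k + 1 < n := by omega
    set s := (univ.image f)ᶜ with hs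
    have card_s : #s = n - (k + 1) := by
      rw [card_compl, card_image_of_injective _ hf]
      simp
    have extension_weight : ∀ y ∈ s, topWeight q hk (Fin.snoc f y : Fin (k + 2) → Fin n) =
        q ^ dtop f * psi d q * q ^ ((if y < f (Fin.last k) then #s else 0) + #{x ∈ s | x < y}) := by
      intro y hy
      have hfy := Fin.snoc_injective_of_injective hf (by simpa [s] using hy)
      rw [ih hk hfy (by omega), dtop_snoc, Ltop_snoc, ← hs, ← card_s,
        show n - (k + 1 + 1) = d by omega]
      ring
    have split_next : topWeight q hkn f =
        ∑ y ∈ s, topWeight q hk (Fin.snoc f y : Fin (k + 2) → Fin n) :=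
      sum_ite_extends_eq_sum_snoc hk f _
    rw [split_next, sum_congr rfl extension_weight, ← mul_sum, sum_pow_ite_card_filter_lt, Ltop_eq,
      card_s, hd, psi_succ]
    ring

theorem stmt3_general (n k : ℕ) (hk : 1 ≤ k) (hkn : k ≤ n) (q : ℝ)
    (f : Fin k → Fin n) (hf : Function.Injective f) :
    (∑ π : Equiv.Perm (Fin n),
        if ∀ i : Fin k, π (Fin.castLE hkn i) = f i then q ^ dR π / psi n q else 0)
      = q ^ (dtop f + Ltop f) * psi (n - k) q / psi n q := by
  obtain ⟨k, rfl⟩ := Nat.exists_eq_add_of_le' hk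
  rw [← topWeight_eq q hkn hf, topWeight, sum_div]
  simp only [ite_div, zero_div]

theorem stmt3 (n k : ℕ) (hk : 1 ≤ k) (hkn : k ≤ n) (q : ℝ) (hq0 : 0 < q) (hq1 : q < 1)
    (f : Fin k → Fin n) (hf : Function.Injective f) :
    (∑ π : Equiv.Perm (Fin n),
        if ∀ i : Fin k, π (Fin.castLE hkn i) = f i then q ^ dR π / psi n q else 0)
      = q ^ (dtop f + Ltop f) * psi (n - k) q / psi n q :=
  stmt3_general n k hk hkn q f hf
end

section
/- Fix n ≥ 3 and q ∈ (0,1), and consider the Mallows model on permutations of [n] with identity central ranking. The probability that item n-1 precedes item n (i.e., is more preferred) in a random permutation, restricted to the information contained in the top n-2 positions, satisfies: Pr(item n-1 appears in the top n-2 positions and is preferred to item n there, or both appear in top n-2 with n-1 first) = (1 - (1-q)(1-q²)/((1-q^{n-1})(1-q^n))) · 1/(1+q). -/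
/-!
Write `n = m + 2`, so that the two least preferred items are `m` and `m + 1` (0-indexed).
Removing the largest item from a ranking in which it sits at position `k` removes exactly
`m + 1 - k` inversions. This insertion decomposition gives the normalising constant
`∑ π, q ^ dK π = ψ(n, q)`, and shows that the rankings ending with the items `m`, `m + 1` in either
order have total weight `(1 + q) ψ(m, q)`, i.e. probability `P_A`. In every other ranking one of the
two items is in the top `m`; exchanging the adjacent items `m` and `m + 1` maps the rankings where
`m` comes first (Group 1) bijectively onto those where `m + 1` comes first and adds exactly one
inversion. Hence `(1 + q) Pr(Group 1) = 1 - P_A`.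
-/

open Finset

/-- Kendall tau distance (inversion count) of a full permutation from the identity. -/
def dK {n : ℕ} (π : Equiv.Perm (Fin n)) : ℕ :=
  ∑ i : Fin n, ∑ j : Fin n, if i < j ∧ π j < π i then 1 else 0

lemma sum_boole_le_val (k m : ℕ) : ∑ j : Fin m, (if k ≤ j.val then 1 else 0) = m - k := by
  rw [Fin.sum_univ_eq_sum_range (fun j ↦ if k ≤ j then 1 else 0), sum_boole]
  simp [← Nat.Ico_zero_eq_range, Ico_filter_le]

namespace Equiv.Perm

variable {m : ℕ}

/-- Positions and items are both `Fin _`; `π i` is the item ranked at position `i`.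
`insertMax k e` ranks the largest item at position `k` and the others in the order `e`. -/
def insertMax (k : Fin (m + 1)) (e : Perm (Fin m)) : Perm (Fin (m + 1)) :=
  (finSuccEquiv' k).trans (e.optionCongr.trans finSuccEquivLast.symm)

@[simp]
lemma insertMax_apply_self (k : Fin (m + 1)) (e : Perm (Fin m)) :
    insertMax k e k = Fin.last m := by
  simp [insertMax]

@[simp]
lemma insertMax_apply_succAbove (k : Fin (m + 1)) (e : Perm (Fin m)) (i : Fin m) :
    insertMax k e (k.succAbove i) = (e i).castSucc := by
  simp [insertMax]

@[simp]
lemma insertMax_symm_last (k : Fin (m + 1)) (e : Perm (Fin m)) :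
    (insertMax k e).symm (Fin.last m) = k := by
  rw [symm_apply_eq, insertMax_apply_self]

@[simp]
lemma insertMax_symm_castSucc (k : Fin (m + 1)) (e : Perm (Fin m)) (x : Fin m) :
    (insertMax k e).symm x.castSucc = k.succAbove (e.symm x) := by
  rw [symm_apply_eq, insertMax_apply_succAbove, apply_symm_apply]

lemma insertMax_injective :
    Function.Injective (fun p : Fin (m + 1) × Perm (Fin m) ↦ insertMax p.1 p.2) := by
  rintro ⟨k, e⟩ ⟨k', e'⟩ h
  have hk : k = k' := by
    simpa using congrArg (fun π : Perm (Fin (m + 1)) ↦ π.symm (Fin.last m)) h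
  subst hk
  have he : e = e' := Equiv.ext fun i ↦ Fin.castSucc_injective _ <| by
    simpa using DFunLike.congr_fun h (k.succAbove i)
  rw [he]

lemma insertMax_bijective :
    Function.Bijective (fun p : Fin (m + 1) × Perm (Fin m) ↦ insertMax p.1 p.2) := by
  rw [Fintype.bijective_iff_injective_and_card]
  exact ⟨insertMax_injective, by simp [Fintype.card_perm, Nat.factorial_succ]⟩

lemma sum_eq_sum_insertMax {M : Type*} [AddCommMonoid M] (f : Perm (Fin (m + 1)) → M) :
    ∑ π, f π = ∑ k, ∑ e, f (insertMax k e) := by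
  rw [← Fintype.sum_prod_type']
  exact (Fintype.sum_bijective _ insertMax_bijective _ _ fun _ ↦ rfl).symm

/-- Inserting the largest item at position `k` creates exactly the inversions with the
`m - k` items ranked after it. -/
lemma dK_insertMax (k : Fin (m + 1)) (e : Perm (Fin m)) :
    dK (insertMax k e) = dK e + (m - k) := by
  have row_max : (∑ j, if k < j ∧ insertMax k e j < insertMax k e k then 1 else 0) = m - k := by
    rw [Fin.sum_univ_succAbove _ k, ← sum_boole_le_val]
    simp [Fin.lt_succAbove_iff_le_castSucc, Fin.le_def, Fin.castSucc_lt_last]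
  have row_other (i : Fin m) :
      (∑ j, if k.succAbove i < j ∧ insertMax k e j < insertMax k e (k.succAbove i) then 1 else 0)
        = ∑ j, if i < j ∧ e j < e i then 1 else 0 := by
    rw [Fin.sum_univ_succAbove _ k]
    simp [Fin.succAbove_lt_succAbove_iff, Fin.le_last]
  rw [dK, Fin.sum_univ_succAbove _ k, row_max, Finset.sum_congr rfl fun i _ ↦ row_other i, dK]
  omega

lemma sum_pow_dK_eq_psi (q : ℝ) (m : ℕ) : ∑ π : Perm (Fin m), q ^ dK π = psi m q := by
  induction m with
  | zero => simp [psi, dK]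
  | succ m ih =>
    have reflect : ∑ k : Fin (m + 1), q ^ (m - k.val) = ∑ j ∈ range (m + 1), q ^ j := by
      rw [Fin.sum_univ_eq_sum_range (fun j ↦ q ^ (m - j)), ← sum_range_reflect]
      exact sum_congr rfl fun j hj ↦ by rw [mem_range] at hj; congr 1; omega
    simp only [sum_eq_sum_insertMax, dK_insertMax, pow_add, ← sum_mul, ih, ← mul_sum, reflect]
    exact (prod_range_succ _ _).symm

lemma sum_pow_dK_of_symm_last_eq_last (q : ℝ) :
    ∑ e : Perm (Fin (m + 1)), (if e.symm (Fin.last m) = Fin.last m then q ^ dK e else 0)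
      = psi m q := by
  simp [sum_eq_sum_insertMax, dK_insertMax, ← sum_pow_dK_eq_psi]

lemma le_val_succAbove_and_le_val_iff (k : Fin (m + 2)) (j : Fin (m + 1)) :
    m ≤ (k.succAbove j).val ∧ m ≤ k.val ↔ j = Fin.last m ∧ m ≤ k.val := by
  have := j.isLt
  rcases Fin.castSucc_lt_or_lt_succ k j with h | h
  · rw [Fin.succAbove_of_castSucc_lt _ _ h, Fin.ext_iff]
    rw [Fin.lt_def] at h
    simp only [Fin.val_castSucc, Fin.val_last] at h ⊢
    omega
  · rw [Fin.succAbove_of_lt_succ _ _ h, Fin.ext_iff]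
    rw [Fin.lt_def] at h
    simp only [Fin.val_succ, Fin.val_last] at h ⊢
    omega

lemma sum_pow_dK_of_last_two (q : ℝ) :
    ∑ π : Perm (Fin (m + 2)),
      (if m ≤ (π.symm (Fin.last m).castSucc).val ∧ m ≤ (π.symm (Fin.last (m + 1))).val
        then q ^ dK π else 0) = (1 + q) * psi m q := by
  have split (k : Fin (m + 2)) (e : Perm (Fin (m + 1))) :
      (if m ≤ ((insertMax k e).symm (Fin.last m).castSucc).val ∧
          m ≤ ((insertMax k e).symm (Fin.last (m + 1))).val
        then q ^ dK (insertMax k e) else 0)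
      = (if m ≤ k.val then q ^ (m + 1 - k) else 0) *
          (if e.symm (Fin.last m) = Fin.last m then q ^ dK e else 0) := by
    simp only [insertMax_symm_castSucc, insertMax_symm_last, le_val_succAbove_and_le_val_iff,
      dK_insertMax, pow_add]
    split_ifs <;> simp_all [mul_comm]
  have top_two : ∑ k : Fin (m + 2), (if m ≤ k.val then q ^ (m + 1 - k) else 0) = 1 + q := by
    rw [Fin.sum_univ_castSucc, Fin.sum_univ_castSucc,
      sum_eq_zero fun k _ ↦ if_neg (by simp)]
    simp [add_comm]
  rw [sum_eq_sum_insertMax]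
  simp only [split, ← mul_sum, ← sum_mul, top_two, sum_pow_dK_of_symm_last_eq_last]

lemma swap_lt_swap_iff_of_val_eq_succ {n : ℕ} {a b x y : Fin n} (hab : b.val = a.val + 1)
    (hxy : ¬(x = a ∧ y = b)) (hyx : ¬(x = b ∧ y = a)) : swap a b x < swap a b y ↔ x < y := by
  simp only [swap_apply_def, Fin.ext_iff] at *
  rw [Fin.lt_def, Fin.lt_def]
  split_ifs <;> omega

/-- No item lies strictly between `a` and `b`, so the only pair of positions whose status
changes is the pair holding `a` and `b`. -/
lemma dK_swap_mul {n : ℕ} {a b : Fin n} (hab : b.val = a.val + 1) {π : Perm (Fin n)}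
    (h : π.symm a < π.symm b) : dK (swap a b * π) = dK π + 1 := by
  have pair (i j : Fin n) :
      (if i < j ∧ (swap a b * π) j < (swap a b * π) i then 1 else 0) =
        (if i < j ∧ π j < π i then 1 else 0) + (if i = π.symm a ∧ j = π.symm b then 1 else 0) := by
    by_cases hij : i < j
    · by_cases hi : i = π.symm a ∧ j = π.symm b
      · obtain ⟨rfl, rfl⟩ := hi
        have hab' : a < b := Fin.lt_def.mpr (by omega)
        simp [h, hab', hab'.not_gt]
      · have hji : ¬(π j = a ∧ π i = b) := by
          rintro ⟨rfl, rfl⟩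
          exact lt_asymm h (by simpa using hij)
        have hi' : ¬(π j = b ∧ π i = a) := by
          rwa [← eq_symm_apply, ← eq_symm_apply, and_comm]
        simp only [mul_apply, swap_lt_swap_iff_of_val_eq_succ hab hji hi']
        simp [hi]
    · have : ¬(i = π.symm a ∧ j = π.symm b) := by
        rintro ⟨rfl, rfl⟩
        exact hij h
      simp [hij, this]
  unfold dK
  simp only [pair, sum_add_distrib]
  simp [ite_and]

lemma sum_pow_dK_swap_order {n : ℕ} {a b : Fin n} (hab : b.val = a.val + 1)
    (P : Fin n → Fin n → Prop) [DecidableRel P] (q : ℝ) :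
    ∑ π : Perm (Fin n), (if π.symm b < π.symm a ∧ P (π.symm b) (π.symm a) then q ^ dK π else 0)
      = q * ∑ π : Perm (Fin n),
          (if π.symm a < π.symm b ∧ P (π.symm a) (π.symm b) then q ^ dK π else 0) := by
  rw [← Equiv.sum_comp (Equiv.mulLeft (swap a b)), mul_sum]
  refine sum_congr rfl fun π _ ↦ ?_
  have hb : (swap a b * π).symm b = π.symm a := by simp [symm_apply_eq]
  have ha : (swap a b * π).symm a = π.symm b := by simp [symm_apply_eq]
  simp only [coe_mulLeft, ha, hb]
  split_ifs with h
  · rw [dK_swap_mul hab h.1, pow_succ, mul_comm]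
  · rw [mul_zero]

lemma one_add_mul_sum_pow_dK_first_before_last (q : ℝ) :
    (1 + q) * ∑ π : Perm (Fin (m + 2)),
      (if π.symm (Fin.last m).castSucc < π.symm (Fin.last (m + 1)) ∧
          (π.symm (Fin.last m).castSucc).val < m then q ^ dK π else 0)
      = psi (m + 2) q - (1 + q) * psi m q := by
  set a : Fin (m + 2) := (Fin.last m).castSucc
  set b : Fin (m + 2) := Fin.last (m + 1)
  have trichotomy (i j : Fin (m + 2)) (hij : i ≠ j) (x : ℝ) :
      x = (if m ≤ i.val ∧ m ≤ j.val then x else 0) + (if i < j ∧ i.val < m then x else 0)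
        + (if j < i ∧ j.val < m then x else 0) := by
    rw [Ne, Fin.ext_iff] at hij
    have := i.isLt
    have := j.isLt
    split_ifs <;> simp only [Fin.lt_def] at * <;> first | (exfalso; omega) | ring
  have swapped := sum_pow_dK_swap_order (a := a) (b := b) (by simp [a, b])
    (fun i _ ↦ i.val < m) q
  have hab : a ≠ b := (Fin.castSucc_lt_last _).ne
  rw [← sum_pow_dK_eq_psi, ← sum_pow_dK_of_last_two,
    sum_congr rfl fun π _ ↦ trichotomy _ _ (π.symm.injective.ne hab) (q ^ dK π),
    sum_add_distrib, sum_add_distrib, swapped]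
  ring

end Equiv.Perm

lemma psi_mul_eq_psi_add_two_mul_sq (m : ℕ) (q : ℝ) :
    psi m q * ((1 - q ^ (m + 1)) * (1 - q ^ (m + 2))) = psi (m + 2) q * (1 - q) ^ 2 := by
  rw [← mul_neg_geom_sum, ← mul_neg_geom_sum, psi, psi, prod_range_succ, prod_range_succ]
  ring

lemma psi_pos (m : ℕ) {q : ℝ} (hq : 0 < q) : 0 < psi m q :=
  prod_pos fun _ _ ↦ sum_pos (fun j _ ↦ pow_pos hq j) nonempty_range_add_one

/-- Group 1 probability under the Mallows model: item n-1 (1-indexed) appears in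
the top n-2 positions and is preferred there to item n (either item n appears after
it among the top n-2, or item n is absent from the top n-2). -/
theorem stmt13 (n : ℕ) (hn : 3 ≤ n) (q : ℝ) (hq0 : 0 < q) (hq1 : q < 1) :
    (∑ π : Equiv.Perm (Fin n),
        if (π.symm ⟨n - 2, by omega⟩).val < n - 2 ∧
            (n - 2 ≤ (π.symm ⟨n - 1, by omega⟩).val ∨
              π.symm ⟨n - 2, by omega⟩ < π.symm ⟨n - 1, by omega⟩)
        then q ^ dK π / psi n q else 0)
      = (1 - (1 - q) * (1 - q ^ 2) / ((1 - q ^ (n - 1)) * (1 - q ^ n))) * (1 / (1 + q)) := by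
  obtain ⟨m, rfl⟩ : ∃ m, n = m + 2 := ⟨n - 2, by omega⟩
  have group1 (i j : Fin (m + 2)) : (i.val < m ∧ (m ≤ j.val ∨ i < j)) ↔ (i < j ∧ i.val < m) := by
    rw [Fin.lt_def]
    omega
  have hsecond : ∀ h, (⟨m, h⟩ : Fin (m + 2)) = (Fin.last m).castSucc := fun _ ↦ rfl
  have hlast : ∀ h, (⟨m + 1, h⟩ : Fin (m + 2)) = Fin.last (m + 1) := fun _ ↦ rfl
  simp only [show m + 2 - 2 = m from rfl, show m + 2 - 1 = m + 1 from rfl, group1, hsecond, hlast,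
    div_eq_mul_inv, ← ite_zero_mul, ← sum_mul]
  have h1q : 0 < 1 + q := by linarith
  have hm1 : q ^ (m + 1) < 1 := pow_lt_one₀ hq0.le hq1 (by omega)
  have hm2 : q ^ (m + 2) < 1 := pow_lt_one₀ hq0.le hq1 (by omega)
  have hS := eq_div_of_mul_eq h1q.ne'
    ((mul_comm _ _).trans (Equiv.Perm.one_add_mul_sum_pow_dK_first_before_last (m := m) q))
  have hpsi := eq_div_of_mul_eq (by nlinarith) (psi_mul_eq_psi_add_two_mul_sq m q)
  rw [hS, hpsi]
  have := psi_pos (m + 2) hq0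
  field_simp
  ring
end
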